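/- Fix real constants m, a, N with m ≠ 0 and consider the ansatz P(z) = (1/(z²-σ²))·[[z²+2mz+A, 2(Nz-am)],[2(Nz-am), -z²+2mz-m²+B]] with unknowns A, B, σ². If det P(z) = -1 identically in z (away from poles) and m² ≠ N², then A = m² - (a+N)², B = (a-N)², and σ² = m² + a² - N²; that is, the determinant condition uniquely determines A, B, σ² in terms of m, a, N. -/
import Mathlib


/-- Two-node AF inverse problem: for the ansatz
`P(z) = (1/(z²-σ²))·[[z²+2mz+A, 2(Nz-am)],[2(Nz-am), -z²+2mz-m²+B]]`,
the determinant condition `det P = -1`, i.e. the polynomial identity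
`(z²+2mz+A)(-z²+2mz-m²+B) - 4(Nz-am)² = -(z²-σ²)²`, together with `m ≠ 0` and
`m² ≠ N²`, uniquely determines `A = m²-(a+N)²`, `B = (a-N)²` and `σ² = m²+a²-N²`. -/
theorem twoNode_AF_inverse (m a N A B S : ℝ) (hm : m ≠ 0) (hmN : m ^ 2 ≠ N ^ 2)
    (hdet : ∀ z : ℝ,
      (z ^ 2 + 2 * m * z + A) * (-z ^ 2 + 2 * m * z - m ^ 2 + B)
        - 4 * (N * z - a * m) ^ 2 = -(z ^ 2 - S) ^ 2) :
    A = m ^ 2 - (a + N) ^ 2 ∧ B = (a - N) ^ 2 ∧ S = m ^ 2 + a ^ 2 - N ^ 2 := by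
  have h0 := hdet 0
  have h1 := hdet 1
  have h2 := hdet (-1)
  -- z¹ coefficient
  have hc1 : (2 * m) * (-m ^ 2 + B + A + 4 * a * N) = 0 := by
    linear_combination h1 / 2 - h2 / 2
  -- z² coefficient
  have hc2 : 3 * m ^ 2 + B - A - 4 * N ^ 2 = 2 * S := by
    linear_combination h1 / 2 + h2 / 2 - h0
  -- z⁰ coefficient
  have hc0 : A * (B - m ^ 2) - 4 * a ^ 2 * m ^ 2 + S ^ 2 = 0 := by
    linear_combination h0
  have hX : -m ^ 2 + B + A + 4 * a * N = 0 := by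
    rcases mul_eq_zero.mp hc1 with h | h
    · exact absurd (by linarith : m = 0) hm
    · exact h
  have hA : A = 2 * m ^ 2 - 2 * a * N - 2 * N ^ 2 - S := by linarith
  have hB : B = -m ^ 2 - 2 * a * N + 2 * N ^ 2 + S := by linarith
  rw [hA, hB] at hc0
  have key : (S - (m ^ 2 + a ^ 2 - N ^ 2)) * (m ^ 2 - N ^ 2) = 0 := by
    linear_combination hc0 / 4
  have hS : S = m ^ 2 + a ^ 2 - N ^ 2 := by
    rcases mul_eq_zero.mp key with h | h
    · linarith
    · exact absurd (by linarith : m ^ 2 = N ^ 2) hmN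
  refine ⟨by rw [hA, hS]; ring, by rw [hB, hS]; ring, hS⟩
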